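/- arXiv:2501.14974 — 4 statements merged into one kernel-verified Lean document; each statement's English description precedes it below -/
import Mathlib

section
/- For the recursively defined sequence h_1(x)=x and h_j(x)=x+h_{j-1}(x)-(1/2)x·h_{j-1}(x), evaluated at x=ε/K with 0<ε≤2 and K a positive integer, we have h_K(ε/K) ≥ ε·(1 - ε(K-1)/(4K)). -/
/-- Composition degradation lower bound: with `h 1 x = x` and
`h j x = x + h (j-1) x - (1/2) * x * h (j-1) x` for `j ≥ 2`,
we have `h K (ε/K) ≥ ε * (1 - ε*(K-1)/(4K))` for `0 < ε ≤ 2`, `K ≥ 1`. -/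
theorem hdp_composition_lower_bound (h : ℕ → ℝ → ℝ)
    (h1 : ∀ x : ℝ, h 1 x = x)
    (hrec : ∀ j : ℕ, 2 ≤ j → ∀ x : ℝ,
      h j x = x + h (j - 1) x - (1 / 2) * x * h (j - 1) x)
    (ε : ℝ) (hε : 0 < ε) (hε2 : ε ≤ 2) (K : ℕ) (hK : 1 ≤ K) :
    ε * (1 - ε * ((K : ℝ) - 1) / (4 * K)) ≤ h K (ε / K) := by
  have hKpos : (0:ℝ) < K := by exact_mod_cast hK
  set x : ℝ := ε / K with hx
  have hx0 : 0 < x := div_pos hε hKpos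
  have hx2 : x ≤ 2 := by
    rw [hx, div_le_iff₀ hKpos]
    nlinarith [(by exact_mod_cast hK : (1:ℝ) ≤ K)]
  have key : ∀ j : ℕ, 1 ≤ j →
      (j : ℝ) * x - x ^ 2 * j * (j - 1) / 4 ≤ h j x ∧ h j x ≤ (j : ℝ) * x := by
    intro j hj
    induction j, hj using Nat.le_induction with
    | base => rw [h1]; norm_num
    | succ n hn ih =>
      have hrec' := hrec (n + 1) (by omega) x
      simp only [Nat.add_sub_cancel] at hrec'
      obtain ⟨ihl, ihu⟩ := ih
      have hn0 : (1:ℝ) ≤ n := by exact_mod_cast hn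
      have h1x : (0:ℝ) ≤ 1 - x / 2 := by linarith
      have hL : (n : ℝ) * x - x ^ 2 * n * (n - 1) / 4 ≤ (n : ℝ) * x := by
        nlinarith
      constructor
      · push_cast
        rw [hrec']
        nlinarith [mul_nonneg h1x (by linarith : (0:ℝ) ≤ h n x - ((n : ℝ) * x - x ^ 2 * n * (n - 1) / 4)),
          mul_nonneg (le_of_lt hx0) (by nlinarith : (0:ℝ) ≤ (n : ℝ) * x - ((n : ℝ) * x - x ^ 2 * n * (n - 1) / 4))]
      · push_cast
        rw [hrec']
        nlinarith [mul_nonneg h1x (by linarith : (0:ℝ) ≤ (n : ℝ) * x - h n x),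
          mul_nonneg hx0.le (mul_nonneg (Nat.cast_nonneg n) hx0.le)]
  have := (key K hK).1
  have heq : (K : ℝ) * x - x ^ 2 * K * ((K : ℝ) - 1) / 4
      = ε * (1 - ε * ((K : ℝ) - 1) / (4 * K)) := by
    rw [hx]; field_simp
  linarith [heq ▸ this]
end

section
/- For one-dimensional Laplace distributions Lap(w₁,b) and Lap(w₂,b) with v=w₁-w₂, the squared Hellinger distance equals 2(1 - e^{-|v|/(2b)}(1 + |v|/(2b))). -/
/-!
Expanding the square, the squared Hellinger distance of two probability densities is
`2 - 2 ∫ √(p q)`. For Laplace densities, `|x - w₁| + |x - w₂| = 2 max (r, |x - m|)` with `m` the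
midpoint and `r = |w₁ - w₂| / 2`, so `√(p q)` is proportional to `exp (-max (r, |x - m|) / b)`:
constant on the interval between `w₁` and `w₂` and exponentially decaying outside it. Its integral
is `2 e^{-r/b} (r + b)`, which gives the Bhattacharyya coefficient `e^{-r/b} (1 + r/b)`.
-/

open MeasureTheory

/-- Density of the Laplace distribution `Lap(w, b)` on `ℝ`. -/
noncomputable def laplacePDF (w b : ℝ) : ℝ → ℝ :=
  fun x => (1 / (2 * b)) * Real.exp (-|x - w| / b)

open Real Set

theorem abs_sub_add_abs_sub_eq_two_mul_max (x a b : ℝ) :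
    |x - a| + |x - b| = 2 * max (|a - b| / 2) |x - (a + b) / 2| := by
  grind [abs_cases]

theorem integral_sqrt_sub_sqrt_sq {α : Type*} [MeasurableSpace α] {μ : Measure α}
    {p q : α → ℝ} (hp₀ : 0 ≤ p) (hq₀ : 0 ≤ q) (hp : Integrable p μ) (hq : Integrable q μ) :
    ∫ x, (√(p x) - √(q x)) ^ 2 ∂μ =
      ∫ x, p x ∂μ + ∫ x, q x ∂μ - 2 * ∫ x, √(p x) * √(q x) ∂μ := by
  have hsq : ∀ x, √(p x) ^ 2 = p x ∧ √(q x) ^ 2 = q x := fun x =>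
    ⟨sq_sqrt (hp₀ x), sq_sqrt (hq₀ x)⟩
  have hpq : Integrable (fun x => √(p x) * √(q x)) μ := by
    refine (hp.add hq).mono' ?_ (.of_forall fun x => ?_)
    · exact (continuous_sqrt.comp_aestronglyMeasurable hp.1).mul
        (continuous_sqrt.comp_aestronglyMeasurable hq.1)
    · rw [norm_of_nonneg (by positivity), Pi.add_apply]
      nlinarith [two_mul_le_add_sq √(p x) √(q x), hsq x, sqrt_nonneg (p x), sqrt_nonneg (q x)]
  have hexpand : ∀ x, (√(p x) - √(q x)) ^ 2 = p x + q x - 2 * (√(p x) * √(q x)) := fun x => by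
    rw [sub_sq, (hsq x).1, (hsq x).2]
    ring
  simp_rw [hexpand]
  rw [integral_sub (f := fun x => p x + q x) (hp.add hq) (hpq.const_mul 2), integral_add hp hq,
    integral_const_mul]

theorem integral_exp_neg_max_abs_div {r b : ℝ} (hr : 0 ≤ r) (hb : 0 < b) :
    ∫ x, exp (-max r |x| / b) = 2 * exp (-r / b) * (r + b) := by
  set f := fun y => exp (-max r y / b)
  have hb' : -b⁻¹ < 0 := by simpa using hb
  have hconst_eq : EqOn f (fun _ => exp (-r / b)) (Ioc 0 r) := fun y hy => by
    simp only [f, max_eq_left hy.2]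
  have htail_eq : EqOn f (fun y => exp (-b⁻¹ * y)) (Ioi r) := fun y (hy : r < y) => by
    simp only [f, max_eq_right hy.le]
    ring_nf
  have hconst : ∫ y in Ioc 0 r, f y = r * exp (-r / b) := by
    rw [setIntegral_congr_fun measurableSet_Ioc hconst_eq, setIntegral_const, smul_eq_mul,
      volume_real_Ioc_of_le hr, sub_zero]
  have htail : ∫ y in Ioi r, f y = b * exp (-r / b) := by
    rw [setIntegral_congr_fun measurableSet_Ioi htail_eq, integral_exp_mul_Ioi hb']
    field_simp
  have hint_tail : IntegrableOn f (Ioi r) :=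
    (integrableOn_exp_mul_Ioi hb' r).congr_fun htail_eq.symm measurableSet_Ioi
  rw [integral_comp_abs (f := f), ← Ioc_union_Ioi_eq_Ioi hr,
    setIntegral_union (Ioc_disjoint_Ioi le_rfl) measurableSet_Ioi
      (by fun_prop : Continuous f).integrableOn_Ioc hint_tail, hconst, htail]
  ring

section Laplace

variable {b : ℝ}

theorem laplacePDF_nonneg (w : ℝ) (hb : 0 ≤ b) : 0 ≤ laplacePDF w b := fun x => by
  unfold laplacePDF
  positivity

theorem integral_laplacePDF (w : ℝ) (hb : 0 < b) : ∫ x, laplacePDF w b x = 1 := by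
  have h := integral_exp_neg_max_abs_div le_rfl hb
  simp only [abs_nonneg, max_eq_right, neg_zero, zero_div, exp_zero, zero_add] at h
  unfold laplacePDF
  rw [integral_const_mul, integral_sub_right_eq_self (fun y => exp (-|y| / b)), h]
  field_simp

theorem integrable_laplacePDF (w : ℝ) (hb : 0 < b) : Integrable (laplacePDF w b) :=
  .of_integral_ne_zero (by rw [integral_laplacePDF w hb]; exact one_ne_zero)

theorem sqrt_laplacePDF_mul_sqrt_laplacePDF (w₁ w₂ x : ℝ) (hb : 0 < b) :
    √(laplacePDF w₁ b x) * √(laplacePDF w₂ b x) =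
      1 / (2 * b) * exp (-max (|w₁ - w₂| / 2) |x - (w₁ + w₂) / 2| / b) := by
  rw [← sqrt_mul (laplacePDF_nonneg w₁ hb.le x), ← sqrt_sq (by positivity : 0 ≤ 1 / (2 * b) * _)]
  congr 1
  unfold laplacePDF
  rw [mul_pow, ← exp_nat_mul, mul_mul_mul_comm, ← exp_add, ← sq]
  congr 2
  linear_combination (-1 / b) * abs_sub_add_abs_sub_eq_two_mul_max x w₁ w₂

theorem integral_sqrt_laplacePDF_mul_sqrt_laplacePDF (w₁ w₂ : ℝ) (hb : 0 < b) :
    ∫ x, √(laplacePDF w₁ b x) * √(laplacePDF w₂ b x) =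
      exp (-|w₁ - w₂| / (2 * b)) * (1 + |w₁ - w₂| / (2 * b)) := by
  simp_rw [sqrt_laplacePDF_mul_sqrt_laplacePDF w₁ w₂ _ hb]
  rw [integral_const_mul,
    integral_sub_right_eq_self (fun y => exp (-max (|w₁ - w₂| / 2) |y| / b)),
    integral_exp_neg_max_abs_div (by positivity) hb]
  field_simp
  ring

end Laplace

/-- The squared Hellinger distance between `Lap(w₁,b)` and `Lap(w₂,b)` with `v = w₁ - w₂`
equals `2 (1 - e^{-|v|/(2b)} (1 + |v|/(2b)))`. -/
theorem hellinger_laplace (b : ℝ) (hb : 0 < b) (w₁ w₂ : ℝ) :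
    (∫ x : ℝ, (Real.sqrt (laplacePDF w₁ b x) - Real.sqrt (laplacePDF w₂ b x)) ^ 2) =
      2 * (1 - Real.exp (-|w₁ - w₂| / (2 * b)) * (1 + |w₁ - w₂| / (2 * b))) := by
  rw [integral_sqrt_sub_sqrt_sq (laplacePDF_nonneg w₁ hb.le) (laplacePDF_nonneg w₂ hb.le)
      (integrable_laplacePDF w₁ hb) (integrable_laplacePDF w₂ hb),
    integral_laplacePDF w₁ hb, integral_laplacePDF w₂ hb,
    integral_sqrt_laplacePDF_mul_sqrt_laplacePDF w₁ w₂ hb]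
  ring
end

section
/- For λ with λ(λ+1)≠0 and λ≠-1/2, the power divergence D_λ between Lap(w₁,b) and Lap(w₂,b) on ℝ equals (1/(λ(λ+1)))·((1/(2b))·[e^{λ|v|/b}(b + b/(2λ+1)) + e^{-(λ+1)|v|/b}(b - b/(2λ+1))] - 1), where v=w₁-w₂. -/
/-!
The integrand `p₁^{λ+1} / p₂^λ` is `(1/(2b)) exp(-(λ+1)|x - w₁|/b + λ|x - w₂|/b)`. After translating
by `w₂` and reflecting so that `v = w₁ - w₂ ≥ 0`, the exponent `p|x - v| + q|x|` is affine on each of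
`(-∞, 0]`, `[0, v]` and `[v, ∞)`, so the integral is a sum of three elementary exponential integrals;
`p + q = -1/b < 0` makes the tails converge and `q - p = (2λ+1)/b ≠ 0` is the slope on `[0, v]`.
-/

open MeasureTheory

open Set Real

lemma integral_exp_mul {c : ℝ} (hc : c ≠ 0) (a b : ℝ) :
    ∫ x in a..b, exp (c * x) = (exp (c * b) - exp (c * a)) / c := by
  rw [intervalIntegral.integral_comp_mul_left (fun x => exp x) hc, integral_exp, smul_eq_mul,
    inv_mul_eq_div]

section

variable {p q v : ℝ}

lemma exp_mul_abs_sub_add_mul_abs_of_nonpos (hv : 0 ≤ v) {x : ℝ} (hx : x ≤ 0) :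
    exp (p * |x - v| + q * |x|) = exp (p * v) * exp (-(p + q) * x) := by
  rw [abs_of_nonpos (by linarith), abs_of_nonpos hx, ← exp_add]
  ring_nf

lemma exp_mul_abs_sub_add_mul_abs_of_mem_Icc {x : ℝ} (hx : x ∈ Icc 0 v) :
    exp (p * |x - v| + q * |x|) = exp (p * v) * exp ((q - p) * x) := by
  rw [abs_of_nonpos (by linarith [hx.2]), abs_of_nonneg hx.1, ← exp_add]
  ring_nf

lemma exp_mul_abs_sub_add_mul_abs_of_le (hv : 0 ≤ v) {x : ℝ} (hx : v ≤ x) :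
    exp (p * |x - v| + q * |x|) = exp (-(p * v)) * exp ((p + q) * x) := by
  rw [abs_of_nonneg (by linarith), abs_of_nonneg (by linarith), ← exp_add]
  ring_nf

lemma integral_exp_mul_abs_sub_add_mul_abs_of_nonneg (hpq : p + q < 0) (hpq' : p ≠ q)
    (hv : 0 ≤ v) :
    ∫ x, exp (p * |x - v| + q * |x|) =
      (exp (p * v) + exp (q * v)) / -(p + q) + (exp (q * v) - exp (p * v)) / (q - p) := by
  set f : ℝ → ℝ := fun x => exp (p * |x - v| + q * |x|)
  have hf : Continuous f := by fun_prop
  have left : EqOn f (fun x => exp (p * v) * exp (-(p + q) * x)) (Iic 0) :=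
    fun x hx => exp_mul_abs_sub_add_mul_abs_of_nonpos hv hx
  have middle : EqOn f (fun x => exp (p * v) * exp ((q - p) * x)) (uIcc 0 v) := by
    rw [uIcc_of_le hv]
    exact fun x hx => exp_mul_abs_sub_add_mul_abs_of_mem_Icc hx
  have right : EqOn f (fun x => exp (-(p * v)) * exp ((p + q) * x)) (Ioi v) :=
    fun x hx => exp_mul_abs_sub_add_mul_abs_of_le hv hx.le
  have int_left : IntegrableOn f (Iic 0) :=
    IntegrableOn.congr_fun ((integrableOn_exp_mul_Iic (neg_pos.2 hpq) 0).const_mul _) left.symm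
      measurableSet_Iic
  have int_right : IntegrableOn f (Ioi v) :=
    IntegrableOn.congr_fun ((integrableOn_exp_mul_Ioi hpq v).const_mul _) right.symm
      measurableSet_Ioi
  have int_Ioi : IntegrableOn f (Ioi 0) := by
    rw [← Ioc_union_Ioi_eq_Ioi hv]
    exact hf.integrableOn_Ioc.union int_right
  rw [← intervalIntegral.integral_Iic_add_Ioi int_left int_Ioi,
    ← intervalIntegral.integral_interval_add_Ioi int_Ioi int_right,
    setIntegral_congr_fun measurableSet_Iic left, intervalIntegral.integral_congr middle,
    setIntegral_congr_fun measurableSet_Ioi right, integral_const_mul,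
    intervalIntegral.integral_const_mul, integral_const_mul,
    integral_exp_mul_Iic (neg_pos.2 hpq), integral_exp_mul (sub_ne_zero.2 hpq'.symm),
    integral_exp_mul_Ioi hpq]
  have hq : exp (p * v) * exp ((q - p) * v) = exp (q * v) := by rw [← exp_add]; ring_nf
  have hq' : exp (-(p * v)) * exp ((p + q) * v) = exp (q * v) := by rw [← exp_add]; ring_nf
  simp only [mul_zero, exp_zero, div_neg]
  linear_combination hq / (q - p) - hq' / (p + q)

end

lemma integral_exp_mul_abs_sub_add_mul_abs {p q : ℝ} (hpq : p + q < 0) (hpq' : p ≠ q) (v : ℝ) :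
    ∫ x, exp (p * |x - v| + q * |x|) =
      (exp (p * |v|) + exp (q * |v|)) / -(p + q) + (exp (q * |v|) - exp (p * |v|)) / (q - p) := by
  rcases le_total 0 v with hv | hv
  · rw [abs_of_nonneg hv]
    exact integral_exp_mul_abs_sub_add_mul_abs_of_nonneg hpq hpq' hv
  · have reflect : ∀ x, |-x - v| = |x - -v| := fun x => by rw [← abs_neg]; ring_nf
    rw [abs_of_nonpos hv, ← integral_neg_eq_self]
    simp only [reflect, abs_neg]
    exact integral_exp_mul_abs_sub_add_mul_abs_of_nonneg hpq hpq' (neg_nonneg.2 hv)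

lemma laplacePDF_rpow {b : ℝ} (hb : 0 < b) (w s x : ℝ) :
    laplacePDF w b x ^ s = (1 / (2 * b)) ^ s * exp (-s / b * |x - w|) := by
  rw [laplacePDF, mul_rpow (by positivity) (exp_pos _).le, ← exp_mul]
  ring_nf

lemma laplacePDF_rpow_div_rpow {b : ℝ} (hb : 0 < b) (l w₁ w₂ x : ℝ) :
    laplacePDF w₁ b x ^ (l + 1) / laplacePDF w₂ b x ^ l =
      1 / (2 * b) * exp (-(l + 1) / b * |x - w₁| + l / b * |x - w₂|) := by
  rw [laplacePDF_rpow hb, laplacePDF_rpow hb, mul_div_mul_comm, ← rpow_sub (by positivity),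
    ← exp_sub, add_sub_cancel_left, rpow_one]
  ring_nf

theorem power_divergence_laplace_general (b : ℝ) (hb : 0 < b)
    (l : ℝ) (hl2 : l ≠ -1 / 2) (w₁ w₂ : ℝ) :
    (1 / (l * (l + 1))) *
        ((∫ x : ℝ, (laplacePDF w₁ b x) ^ (l + 1) / (laplacePDF w₂ b x) ^ l) - 1) =
      (1 / (l * (l + 1))) *
        ((1 / (2 * b)) *
            (Real.exp (l * |w₁ - w₂| / b) * (b + b / (2 * l + 1)) +
              Real.exp (-(l + 1) * |w₁ - w₂| / b) * (b - b / (2 * l + 1))) - 1) := by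
  have hsum : -(l + 1) / b + l / b < 0 := by
    rw [← add_div]; exact div_neg_of_neg_of_pos (by linarith) hb
  have hne : -(l + 1) / b ≠ l / b := fun h => hl2 <| by
    field_simp at h; linarith
  have translate : ∫ x, exp (-(l + 1) / b * |x - w₁| + l / b * |x - w₂|) =
      ∫ x, exp (-(l + 1) / b * |x - (w₁ - w₂)| + l / b * |x|) := by
    simpa only [sub_sub_sub_cancel_right] using
      integral_sub_right_eq_self (fun x => exp (-(l + 1) / b * |x - (w₁ - w₂)| + l / b * |x|)) w₂
  simp only [laplacePDF_rpow_div_rpow hb]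
  rw [integral_const_mul, translate, integral_exp_mul_abs_sub_add_mul_abs hsum hne,
    div_mul_eq_mul_div, div_mul_eq_mul_div]
  field_simp
  ring

/-- For `λ(λ+1) ≠ 0` and `λ ≠ -1/2`, the power divergence `D_λ` between `Lap(w₁,b)` and
`Lap(w₂,b)` equals
`(1/(λ(λ+1))) ((1/(2b)) [e^{λ|v|/b}(b + b/(2λ+1)) + e^{-(λ+1)|v|/b}(b - b/(2λ+1))] - 1)`,
where `v = w₁ - w₂`. -/
theorem power_divergence_laplace (b : ℝ) (hb : 0 < b)
    (l : ℝ) (hl : l * (l + 1) ≠ 0) (hl2 : l ≠ -1 / 2) (w₁ w₂ : ℝ) :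
    (1 / (l * (l + 1))) *
        ((∫ x : ℝ, (laplacePDF w₁ b x) ^ (l + 1) / (laplacePDF w₂ b x) ^ l) - 1) =
      (1 / (l * (l + 1))) *
        ((1 / (2 * b)) *
            (Real.exp (l * |w₁ - w₂| / b) * (b + b / (2 * l + 1)) +
              Real.exp (-(l + 1) * |w₁ - w₂| / b) * (b - b / (2 * l + 1))) - 1) :=
  power_divergence_laplace_general b hb l hl2 w₁ w₂
end

section
/- Adaptive composition for power divergence: if D_λ(p₁,p₂) ≤ ε₁ for the marginals and D_λ(q_{Y₁|X₁=x}, q_{Y₂|X₂=x}) ≤ ε₂ for all x (conditional divergences), with λ(λ+1)>0, then the power divergence between the joint distributions p₁(x)q₁(y|x) and p₂(x)q₂(y|x) is at most ε₁ + ε₂ + λ(λ+1)ε₁ε₂. -/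
open MeasureTheory

/-- Adaptive composition for power divergence: if the marginal power divergence
`D_λ(p₁,p₂) ≤ ε₁` and all conditional power divergences `D_λ(q₁(·|x), q₂(·|x)) ≤ ε₂`,
with `λ(λ+1) > 0`, then the power divergence between the joint densities
`p₁(x)q₁(y|x)` and `p₂(x)q₂(y|x)` is at most `ε₁ + ε₂ + λ(λ+1)ε₁ε₂`. -/
theorem pdp_adaptive_composition
    {α β : Type*} [MeasurableSpace α] [MeasurableSpace β]
    (μ : Measure α) (ν : Measure β) [SigmaFinite μ] [SigmaFinite ν]
    (p₁ p₂ : α → ℝ) (q₁ q₂ : α → β → ℝ) (l ε₁ ε₂ : ℝ)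
    (hl : 0 < l * (l + 1)) (hε₁ : 0 ≤ ε₁) (hε₂ : 0 ≤ ε₂)
    (hp₁ : ∀ x, 0 ≤ p₁ x) (hp₂ : ∀ x, 0 ≤ p₂ x)
    (hq₁ : ∀ x y, 0 ≤ q₁ x y) (hq₂ : ∀ x y, 0 ≤ q₂ x y)
    (hint₁ : Integrable (fun x => (p₁ x) ^ (l + 1) / (p₂ x) ^ l) μ)
    (hint₂ : ∀ x, Integrable (fun y => (q₁ x y) ^ (l + 1) / (q₂ x y) ^ l) ν)
    (hmarg : (1 / (l * (l + 1))) * ((∫ x, (p₁ x) ^ (l + 1) / (p₂ x) ^ l ∂μ) - 1) ≤ ε₁)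
    (hcond : ∀ x, (1 / (l * (l + 1))) *
      ((∫ y, (q₁ x y) ^ (l + 1) / (q₂ x y) ^ l ∂ν) - 1) ≤ ε₂) :
    (1 / (l * (l + 1))) *
        ((∫ z : α × β, (p₁ z.1 * q₁ z.1 z.2) ^ (l + 1) / (p₂ z.1 * q₂ z.1 z.2) ^ l
            ∂(μ.prod ν)) - 1) ≤
      ε₁ + ε₂ + l * (l + 1) * ε₁ * ε₂ := by
  set L := l * (l + 1) with hL
  have hLpos : (0:ℝ) < L := hl
  have hRHS : (0:ℝ) ≤ ε₁ + ε₂ + L * ε₁ * ε₂ := by positivity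
  by_cases hInt : Integrable
      (fun z : α × β => (p₁ z.1 * q₁ z.1 z.2) ^ (l + 1) / (p₂ z.1 * q₂ z.1 z.2) ^ l)
      (μ.prod ν)
  · -- pointwise factorization
    have hfact : ∀ (x : α) (y : β),
        (p₁ x * q₁ x y) ^ (l + 1) / (p₂ x * q₂ x y) ^ l
          = ((p₁ x) ^ (l + 1) / (p₂ x) ^ l) * ((q₁ x y) ^ (l + 1) / (q₂ x y) ^ l) := by
      intro x y
      rw [Real.mul_rpow (hp₁ x) (hq₁ x y), Real.mul_rpow (hp₂ x) (hq₂ x y),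
        div_mul_div_comm]
    have hfnn : ∀ x, 0 ≤ (p₁ x) ^ (l + 1) / (p₂ x) ^ l := by
      intro x
      exact div_nonneg (Real.rpow_nonneg (hp₁ x) _) (Real.rpow_nonneg (hp₂ x) _)
    have hgnn : ∀ x y, 0 ≤ (q₁ x y) ^ (l + 1) / (q₂ x y) ^ l := by
      intro x y
      exact div_nonneg (Real.rpow_nonneg (hq₁ x y) _) (Real.rpow_nonneg (hq₂ x y) _)
    have hcondA : ∀ x, (∫ y, (q₁ x y) ^ (l + 1) / (q₂ x y) ^ l ∂ν) ≤ 1 + L * ε₂ := by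
      intro x
      have h := hcond x
      rw [one_div, inv_mul_le_iff₀ hLpos] at h
      linarith
    have hmargA : (∫ x, (p₁ x) ^ (l + 1) / (p₂ x) ^ l ∂μ) ≤ 1 + L * ε₁ := by
      have h := hmarg
      rw [one_div, inv_mul_le_iff₀ hLpos] at h
      linarith
    have hiter : (∫ z : α × β,
          (p₁ z.1 * q₁ z.1 z.2) ^ (l + 1) / (p₂ z.1 * q₂ z.1 z.2) ^ l ∂(μ.prod ν))
        = ∫ x, ((p₁ x) ^ (l + 1) / (p₂ x) ^ l) *
            (∫ y, (q₁ x y) ^ (l + 1) / (q₂ x y) ^ l ∂ν) ∂μ := by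
      rw [MeasureTheory.integral_prod _ hInt]
      refine integral_congr_ae (Filter.Eventually.of_forall fun x => ?_)
      simp only [hfact]
      exact integral_const_mul _ _
    have hIntIter : Integrable (fun x => ((p₁ x) ^ (l + 1) / (p₂ x) ^ l) *
        (∫ y, (q₁ x y) ^ (l + 1) / (q₂ x y) ^ l ∂ν)) μ := by
      have := hInt.integral_prod_left
      refine this.congr (Filter.Eventually.of_forall fun x => ?_)
      simp only [hfact]
      exact integral_const_mul _ _
    have hbound : (∫ x, ((p₁ x) ^ (l + 1) / (p₂ x) ^ l) *
          (∫ y, (q₁ x y) ^ (l + 1) / (q₂ x y) ^ l ∂ν) ∂μ)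
        ≤ (1 + L * ε₂) * (∫ x, (p₁ x) ^ (l + 1) / (p₂ x) ^ l ∂μ) := by
      rw [← integral_const_mul]
      refine integral_mono hIntIter (hint₁.const_mul _) fun x => ?_
      have := hcondA x
      have hf := hfnn x
      nlinarith [this, hf]
    have hA0 : (0:ℝ) ≤ ∫ x, (p₁ x) ^ (l + 1) / (p₂ x) ^ l ∂μ :=
      integral_nonneg hfnn
    have hfin : (∫ z : α × β,
          (p₁ z.1 * q₁ z.1 z.2) ^ (l + 1) / (p₂ z.1 * q₂ z.1 z.2) ^ l ∂(μ.prod ν))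
        ≤ (1 + L * ε₂) * (1 + L * ε₁) := by
      rw [hiter]
      refine hbound.trans ?_
      have h2 : (0:ℝ) ≤ 1 + L * ε₂ := by positivity
      nlinarith [hmargA, hA0]
    rw [one_div, inv_mul_le_iff₀ hLpos]
    nlinarith [hfin]
  · rw [integral_undef hInt]
    have : (1 / L) * ((0:ℝ) - 1) ≤ 0 := by
      have h1 : (0:ℝ) < 1 / L := div_pos one_pos hLpos
      nlinarith
    linarith
end
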